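/- arXiv:0709.0885 — 3 statements merged into one kernel-verified Lean document; each statement's English description precedes it below -/
import Mathlib

section
/- For every integer m ≥ 1: if m is even then S_{3,0}(2^m) = 2·3^{m/2 − 1}, and if m is odd then S_{3,0}(2^m) = 3^{(m−1)/2}. -/
/-!
Writing `n = 2j + ε`, the sign `(-1)^σ(n)` equals `(-1)^ε (-1)^σ(j)`, and `2j + ε ≡ l (mod 3)`
fixes `j mod 3`. Hence the vector `(S_{3,0}, S_{3,1}, S_{3,2})(2^m)` obeys the linear recursion
`(a, b, c) ↦ (a - b, c - a, b - c)`. Starting from `(1, -1, 0)` at `m = 1`, one step gives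
`(2·3^k, -3^k, -3^k)` from `(3^k, -3^k, 0)`, and a second step gives `(3^(k+1), -3^(k+1), 0)`.
-/

/-- binary digit sum -/
def sigma2 (n : ℕ) : ℕ := (Nat.digits 2 n).sum

/-- `S m l x = Σ_{0 ≤ n < x, n ≡ l (mod m)} (−1)^{σ(n)}` -/
def S (m l x : ℕ) : ℤ :=
  ∑ n ∈ (Finset.range x).filter (fun n => n % m = l), (-1 : ℤ) ^ sigma2 n

open Finset

theorem sigma2_two_mul (j : ℕ) : sigma2 (2 * j) = sigma2 j := by
  rcases Nat.eq_zero_or_pos j with rfl | hj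
  · rfl
  · rw [sigma2, Nat.digits_def' one_lt_two (by omega)]
    simp [sigma2]

theorem sigma2_two_mul_add_one (j : ℕ) : sigma2 (2 * j + 1) = sigma2 j + 1 := by
  rw [sigma2, Nat.digits_def' one_lt_two (by omega), show (2 * j + 1) % 2 = 1 by omega,
    show (2 * j + 1) / 2 = j by omega, List.sum_cons, sigma2, add_comm]

theorem sum_range_two_mul {M : Type*} [AddCommMonoid M] (f : ℕ → M) (x : ℕ) :
    ∑ n ∈ range (2 * x), f n = ∑ j ∈ range x, (f (2 * j) + f (2 * j + 1)) := by
  induction x with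
  | zero => simp
  | succ x ih =>
    rw [Nat.mul_succ, sum_range_succ, sum_range_succ, add_assoc, ih, sum_range_succ]

theorem S_two_mul (m l x : ℕ) :
    S m l (2 * x) =
      ∑ j ∈ range x with 2 * j % m = l, (-1 : ℤ) ^ sigma2 j -
        ∑ j ∈ range x with (2 * j + 1) % m = l, (-1 : ℤ) ^ sigma2 j := by
  rw [S, sum_filter, sum_range_two_mul, sum_filter, sum_filter, ← sum_sub_distrib]
  refine sum_congr rfl fun j _ => ?_
  rw [sigma2_two_mul, sigma2_two_mul_add_one, pow_succ]
  split_ifs <;> ring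

theorem S_three_two_mul (x : ℕ) :
    S 3 0 (2 * x) = S 3 0 x - S 3 1 x ∧
      S 3 1 (2 * x) = S 3 2 x - S 3 0 x ∧
      S 3 2 (2 * x) = S 3 1 x - S 3 2 x := by
  simp only [S_two_mul]
  unfold S
  refine ⟨?_, ?_, ?_⟩ <;>
    congr 1 <;> exact sum_congr (filter_congr fun j _ => by omega) fun _ _ => rfl

theorem S_three_two_pow_odd (k : ℕ) :
    S 3 0 (2 ^ (2 * k + 1)) = 3 ^ k ∧ S 3 1 (2 ^ (2 * k + 1)) = -3 ^ k ∧
      S 3 2 (2 ^ (2 * k + 1)) = 0 := by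
  induction k with
  | zero => refine ⟨?_, ?_, ?_⟩ <;> decide
  | succ k ih =>
    obtain ⟨h0, h1, h2⟩ := ih
    obtain ⟨e0, e1, e2⟩ := S_three_two_mul (2 ^ (2 * k + 1))
    obtain ⟨f0, f1, f2⟩ := S_three_two_mul (2 * 2 ^ (2 * k + 1))
    rw [show 2 * (k + 1) + 1 = 2 * k + 1 + 1 + 1 by ring, pow_succ, pow_succ, mul_comm,
      mul_comm _ 2, f0, f1, f2, e0, e1, e2, h0, h1, h2]
    refine ⟨?_, ?_, ?_⟩ <;> ring

theorem stmt_0 (m : ℕ) (hm : 1 ≤ m) :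
    (Even m → S 3 0 (2 ^ m) = 2 * 3 ^ (m / 2 - 1)) ∧
    (Odd m → S 3 0 (2 ^ m) = 3 ^ ((m - 1) / 2)) := by
  constructor
  · rintro ⟨r, rfl⟩
    obtain ⟨k, rfl⟩ : ∃ k, r = k + 1 := ⟨r - 1, by omega⟩
    obtain ⟨h0, h1, -⟩ := S_three_two_pow_odd k
    rw [show k + 1 + (k + 1) = 2 * k + 1 + 1 by ring, pow_succ, mul_comm,
      (S_three_two_mul _).1, h0, h1, show (2 * k + 1 + 1) / 2 - 1 = k by omega]
    ring
  · rintro ⟨k, rfl⟩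
    rw [(S_three_two_pow_odd k).1, show (2 * k + 1 - 1) / 2 = k by omega]
end

section
/- For all even nonnegative integers x and y with x < y, one has S_{3,0}([4x, 4y)) = 3·S_{3,0}([x, y)). -/
/-- `Sint m l x y = S_{m,l}([x,y)) = S_{m,l}(y) − S_{m,l}(x)` -/
def Sint (m l x y : ℕ) : ℤ := S m l y - S m l x

/-
Write `ε n = (-1) ^ σ(n)`. For `r < 4` the digits of `4 n + r` are those of `r` followed by those
of `n`, so `ε (4 n + r) = ε n · (1, -1, -1, 1)ᵣ`, and `4 n + r ≡ n + r (mod 3)`. Hence the block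
`[4 n, 4 n + 4)` contributes `2 ε n` to `S_{3,0}` if `3 ∣ n` and `-ε n` otherwise. For even `n`
one has `ε (n + 1) = -ε n`, and the two blocks starting at `4 n` contribute exactly
`3 · S_{3,0}([n, n + 2))`; summing over consecutive pairs gives the theorem.
-/

lemma sigma2_two_mul_add (n r : ℕ) (hr : r < 2) : sigma2 (2 * n + r) = sigma2 n + r := by
  by_cases h : r ≠ 0 ∨ n ≠ 0
  · rw [sigma2, add_comm (2 * n), Nat.digits_add 2 one_lt_two r n hr h, List.sum_cons, ← sigma2,
      add_comm]
  · push Not at h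
    obtain ⟨rfl, rfl⟩ := h
    rfl

lemma sigma2_succ_of_even {n : ℕ} (hn : Even n) : sigma2 (n + 1) = sigma2 n + 1 := by
  obtain ⟨m, rfl⟩ := hn
  rw [← two_mul, sigma2_two_mul_add m 1 one_lt_two, ← add_zero (2 * m),
    sigma2_two_mul_add m 0 two_pos, add_zero]

lemma sigma2_four_mul_add (n r : ℕ) (hr : r < 4) :
    sigma2 (4 * n + r) = sigma2 n + sigma2 r := by
  have h4 : 4 * n + r = 2 * (2 * n + r / 2) + r % 2 := by omega
  have hr' : r = 2 * (r / 2) + r % 2 := by omega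
  rw [h4, sigma2_two_mul_add _ _ (Nat.mod_lt _ two_pos), sigma2_two_mul_add _ _ (by omega), hr',
    sigma2_two_mul_add _ _ (Nat.mod_lt _ two_pos), Nat.mul_add_div two_pos, Nat.mul_add_mod]
  interval_cases r <;> simp [sigma2]

lemma Sint_consecutive (m l x y z : ℕ) : Sint m l x y + Sint m l y z = Sint m l x z := by
  unfold Sint; ring

lemma Sint_succ (m l n : ℕ) :
    Sint m l n (n + 1) = if n % m = l then (-1 : ℤ) ^ sigma2 n else 0 := by
  simp only [Sint, S, Finset.sum_filter, Finset.sum_range_succ, add_sub_cancel_left]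

lemma Sint_add_eq_sum (m l x k : ℕ) :
    Sint m l x (x + k) = ∑ i ∈ Finset.range k,
      if (x + i) % m = l then (-1 : ℤ) ^ sigma2 (x + i) else 0 := by
  induction k with
  | zero => simp [Sint]
  | succ k ih =>
    rw [← Sint_consecutive _ _ _ (x + k), ih, ← add_assoc, Sint_succ, Finset.sum_range_succ]

lemma Sint_three_zero_four_mul_succ (n : ℕ) :
    Sint 3 0 (4 * n) (4 * (n + 1)) = (-1) ^ sigma2 n * if n % 3 = 0 then 2 else -1 := by
  have hσ : ∀ r < 4, (-1 : ℤ) ^ sigma2 (4 * n + r) = (-1) ^ sigma2 n * (-1) ^ sigma2 r :=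
    fun r hr => by rw [sigma2_four_mul_add n r hr, pow_add]
  simp only [mul_add, mul_one, Sint_add_eq_sum, Finset.sum_range_succ, Finset.sum_range_zero,
    hσ 0 (by norm_num), hσ 1 (by norm_num), hσ 2 (by norm_num), hσ 3 (by norm_num)]
  have hσ0123 : sigma2 0 = 0 ∧ sigma2 1 = 1 ∧ sigma2 2 = 1 ∧ sigma2 3 = 2 := by
    norm_num [sigma2]
  rcases (by omega : n % 3 = 0 ∨ n % 3 = 1 ∨ n % 3 = 2) with h | h | h <;>
    simp [h, hσ0123, Nat.add_mod, Nat.mul_mod, mul_two]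

lemma Sint_three_zero_four_mul_add_two {x : ℕ} (hx : Even x) :
    Sint 3 0 (4 * x) (4 * (x + 2)) = 3 * Sint 3 0 x (x + 2) := by
  rw [← Sint_consecutive 3 0 (4 * x) (4 * (x + 1)), ← Sint_consecutive 3 0 x (x + 1),
    Sint_three_zero_four_mul_succ, Sint_three_zero_four_mul_succ, Sint_succ, Sint_succ,
    sigma2_succ_of_even hx, pow_succ]
  rcases (by omega : x % 3 = 0 ∨ x % 3 = 1 ∨ x % 3 = 2) with h | h | h <;>
    simp [h, Nat.add_mod] <;> ring

lemma Sint_three_zero_four_mul_add_two_mul {x : ℕ} (hx : Even x) (k : ℕ) :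
    Sint 3 0 (4 * x) (4 * (x + 2 * k)) = 3 * Sint 3 0 x (x + 2 * k) := by
  induction k with
  | zero => simp [Sint]
  | succ k ih =>
    rw [show x + 2 * (k + 1) = x + 2 * k + 2 by ring,
      ← Sint_consecutive 3 0 (4 * x) (4 * (x + 2 * k)) (4 * (x + 2 * k + 2)), ih,
      Sint_three_zero_four_mul_add_two (hx.add (even_two_mul k)),
      ← Sint_consecutive 3 0 x (x + 2 * k) (x + 2 * k + 2), mul_add]

theorem stmt_5 (x y : ℕ) (hx : Even x) (hy : Even y) (hxy : x < y) :
    Sint 3 0 (4 * x) (4 * y) = 3 * Sint 3 0 x y := by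
  obtain ⟨k, rfl⟩ : ∃ k, y = x + 2 * k := by
    obtain ⟨a, rfl⟩ := hx
    obtain ⟨b, rfl⟩ := hy
    exact ⟨b - a, by omega⟩
  exact Sint_three_zero_four_mul_add_two_mul hx k
end

section
/- Let y be a positive integer and m ≥ 1 an integer with 2^m dividing y. If t(y) ≡ 0 (mod 6) then S_{3,0}([y, y + 2^m)) = S_{3,0}(2^m), and if t(y) ≡ 3 (mod 6) then S_{3,0}([y, y + 2^m)) = −S_{3,0}(2^m). -/
/-- `t y = Σ (−1)^{k}` over the exponents `k` in the binary expansion of `y` -/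
def t (y : ℕ) : ℤ := ∑ i ∈ Finset.range y, if y.testBit i then (-1 : ℤ) ^ i else 0

lemma sigma2_eq_mod_two_add_sigma2_div_two (n : ℕ) : sigma2 n = n % 2 + sigma2 (n / 2) := by
  rcases Nat.eq_zero_or_pos n with rfl | hn
  · simp [sigma2]
  · simp [sigma2, Nat.digits_def' (by norm_num : 1 < 2) hn]

lemma sigma2_add_of_two_pow_dvd {m y k : ℕ} (hdvd : 2 ^ m ∣ y) (hk : k < 2 ^ m) :
    sigma2 (y + k) = sigma2 y + sigma2 k := by
  induction m generalizing y k with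
  | zero =>
    obtain rfl : k = 0 := by simpa using hk
    rfl
  | succ m ih =>
    obtain ⟨q, rfl⟩ := hdvd
    rw [pow_succ'] at hk
    have hsum := ih (dvd_mul_right (2 ^ m) q) (Nat.div_lt_of_lt_mul hk)
    rw [pow_succ', mul_assoc]
    generalize 2 ^ m * q = a at hsum ⊢
    rw [sigma2_eq_mod_two_add_sigma2_div_two (_ + k), sigma2_eq_mod_two_add_sigma2_div_two k,
      sigma2_eq_mod_two_add_sigma2_div_two (2 * a), show (2 * a + k) / 2 = a + k / 2 by omega,
      hsum, Nat.mul_div_cancel_left a two_pos]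
    omega

lemma t_eq_sum_range {y N : ℕ} (h : y ≤ N) :
    t y = ∑ i ∈ Finset.range N, if y.testBit i then (-1 : ℤ) ^ i else 0 := by
  refine Finset.sum_subset (Finset.range_subset_range.mpr h) fun i _ hi => ?_
  rw [Finset.mem_range, not_lt] at hi
  simp [Nat.testBit_eq_false_of_lt (hi.trans_lt i.lt_two_pow_self)]

lemma t_eq_mod_two_sub_t_div_two (y : ℕ) : t y = ((y % 2 : ℕ) : ℤ) - t (y / 2) := by
  have hshift (i : ℕ) : (if y.testBit (i + 1) then (-1 : ℤ) ^ (i + 1) else 0) =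
      -(if (y / 2).testBit i then (-1) ^ i else 0) := by
    rw [Nat.testBit_succ]
    split_ifs <;> ring
  rw [t_eq_sum_range (Nat.le_succ y), Finset.sum_range_succ', t_eq_sum_range (Nat.div_le_self y 2)]
  simp only [hshift, Finset.sum_neg_distrib, Nat.testBit_zero]
  rcases Nat.mod_two_eq_zero_or_one y with h | h <;> simp [h, neg_add_eq_sub]

lemma t_emod_three (y : ℕ) : t y % 3 = (y : ℤ) % 3 := by
  induction y using Nat.strong_induction_on with
  | _ y ih =>
    rcases Nat.eq_zero_or_pos y with rfl | hy
    · simp [t]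
    · have := ih (y / 2) (Nat.div_lt_self hy one_lt_two)
      rw [t_eq_mod_two_sub_t_div_two]
      omega

lemma t_emod_two (y : ℕ) : t y % 2 = (sigma2 y : ℤ) % 2 := by
  induction y using Nat.strong_induction_on with
  | _ y ih =>
    rcases Nat.eq_zero_or_pos y with rfl | hy
    · simp [t, sigma2]
    · have := ih (y / 2) (Nat.div_lt_self hy one_lt_two)
      rw [t_eq_mod_two_sub_t_div_two, sigma2_eq_mod_two_add_sigma2_div_two y]
      omega

lemma Sint_add_two_pow_of_dvd {M l y m : ℕ} (hM : M ∣ y) (hdvd : 2 ^ m ∣ y) :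
    Sint M l y (y + 2 ^ m) = (-1) ^ sigma2 y * S M l (2 ^ m) := by
  simp only [Sint, S, Finset.sum_filter, Finset.sum_range_add, add_sub_cancel_left, Finset.mul_sum]
  refine Finset.sum_congr rfl fun k hk => ?_
  rw [sigma2_add_of_two_pow_dvd hdvd (Finset.mem_range.mp hk), pow_add]
  simp only [Nat.add_mod, Nat.mod_eq_zero_of_dvd hM, zero_add, Nat.mod_mod]
  split_ifs <;> simp

theorem stmt_13_general (y m : ℕ) (hdvd : 2 ^ m ∣ y) :
    (t y % 6 = 0 → Sint 3 0 y (y + 2 ^ m) = S 3 0 (2 ^ m)) ∧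
    (t y % 6 = 3 → Sint 3 0 y (y + 2 ^ m) = -S 3 0 (2 ^ m)) := by
  have h3 := t_emod_three y
  have h2 := t_emod_two y
  constructor
  · intro h6
    have heven : Even (sigma2 y) := Nat.even_iff.mpr (by omega)
    rw [Sint_add_two_pow_of_dvd (by omega) hdvd, heven.neg_one_pow, one_mul]
  · intro h6
    have hodd : Odd (sigma2 y) := Nat.odd_iff.mpr (by omega)
    rw [Sint_add_two_pow_of_dvd (by omega) hdvd, hodd.neg_one_pow, neg_one_mul]

theorem stmt_13 (y m : ℕ) (hy : 0 < y) (hm : 1 ≤ m) (hdvd : 2 ^ m ∣ y) :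
    (t y % 6 = 0 → Sint 3 0 y (y + 2 ^ m) = S 3 0 (2 ^ m)) ∧
    (t y % 6 = 3 → Sint 3 0 y (y + 2 ^ m) = -S 3 0 (2 ^ m)) :=
  stmt_13_general y m hdvd
end
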